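/- arXiv:1402.1896 — 2 statements merged into one kernel-verified Lean document; each statement's English description precedes it below -/
import Mathlib

section
/- Let σ be a Hamiltonian cycle on nodes {1,…,n} starting and ending at node 1, and define u_i for i ≥ 2 as the position (in {2,…,n}) at which node i is visited along σ. Then for all distinct i, j ∈ {2,…,n}, the Miller–Tucker–Zemlin inequality u_i − u_j + 1 ≤ (n−1)(1 − x_{ij}) holds, where x_{ij} = 1 if j immediately follows i on σ and x_{ij} = 0 otherwise. -/
/-!
Write `a` and `b` for the positions of `i` and `j` on the cycle, so that `u i - u j + 1 = a - b + 1`.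
Since `j` is not the start node, `1 ≤ b`. If `j` follows `i`, the step `a ↦ a + 1` does not wrap
around (it lands on `b ≠ 0`), so `b = a + 1` as integers and the left side is `0`. Otherwise the
left side is at most `(n - 1) - 1 + 1 = n - 1`.
-/

theorem Fin.val_add_one_of_add_one_ne_zero {n : ℕ} [NeZero n] {a : Fin n} (h : a + 1 ≠ 0) :
    ((a + 1 : Fin n) : ℕ) = a + 1 := by
  obtain ⟨m, rfl⟩ := Nat.exists_eq_succ_of_ne_zero (NeZero.ne n)
  rw [Fin.val_add_one, if_neg]
  rintro rfl
  exact h (Fin.last_add_one m)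

theorem mtz_inequality_of_positions {n : ℕ} [NeZero n] {a b : Fin n} (hb : b ≠ 0) :
    (a : ℤ) - b + 1 ≤ ((n : ℤ) - 1) * (1 - if b = a + 1 then 1 else 0) := by
  split_ifs with hab
  · subst hab
    have := Fin.val_add_one_of_add_one_ne_zero hb
    omega
  · have hb_pos : 1 ≤ (b : ℕ) := Nat.one_le_iff_ne_zero.mpr (Fin.val_ne_zero_iff.mpr hb)
    have ha_lt : (a : ℕ) < n := a.isLt
    omega

theorem mtz_holds_on_hamiltonian_cycle_general (n : ℕ) [NeZero n]
    (p : Fin n ≃ Fin n) (hp : p 0 = 0)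
    (u : Fin n → ℤ) (hu : ∀ i, u i = (p.symm i : ℤ) + 1)
    (x : Fin n → Fin n → ℤ)
    (hx : ∀ i j, x i j = if p.symm j = p.symm i + 1 then 1 else 0) :
    ∀ i j : Fin n, i ≠ 0 → j ≠ 0 → i ≠ j →
      u i - u j + 1 ≤ ((n : ℤ) - 1) * (1 - x i j) := by
  intro i j _ hj _
  have hj_ne : p.symm j ≠ 0 := fun h => hj (by rw [← p.apply_symm_apply j, h, hp])
  rw [hu, hu, hx, add_sub_add_right_eq_sub]
  exact mtz_inequality_of_positions hj_ne

/-- MTZ inequalities hold along a Hamiltonian cycle. `p` is the visit-order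
bijection (`p k` is the node visited at step `k`), starting at node `0`;
`u i = (position of i) + 1` lies in `{2,…,n}` for `i ≠ 0`, and
`x i j = 1` iff `j` immediately follows `i` (cyclically). Then for distinct
`i, j ≠ 0`, `u i - u j + 1 ≤ (n-1) * (1 - x i j)`. -/
theorem mtz_holds_on_hamiltonian_cycle (n : ℕ) [NeZero n] (hn : 2 ≤ n)
    (p : Fin n ≃ Fin n) (hp : p 0 = 0)
    (u : Fin n → ℤ) (hu : ∀ i, u i = (p.symm i : ℤ) + 1)
    (x : Fin n → Fin n → ℤ)
    (hx : ∀ i j, x i j = if p.symm j = p.symm i + 1 then 1 else 0) :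
    ∀ i j : Fin n, i ≠ 0 → j ≠ 0 → i ≠ j →
      u i - u j + 1 ≤ ((n : ℤ) - 1) * (1 - x i j) :=
  mtz_holds_on_hamiltonian_cycle_general n p hp u hu x hx
end

section
/- For the QCOP utility J on a graph where each node has unit reward (r_i = 1) and weights w_{ji} = 1/|N_i|, the utility of a vertex set S (x_i = 1 iff i ∈ S) is J(S) = Σ_{i∈S} (1 + Σ_{j ∈ N_i, j ∉ S} 1/|N_j| ), and hence J(S) ≤ n, with J(S) = n if and only if every node not in S has all of its neighbors in S. -/
open Finset

/-- Unit rewards and weights `w j i = 1/|N i|`: the QCOP utility of a visited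
set `S` equals `∑_{i∈S} (1 + ∑_{j∈N i \ S} 1/|N j|)`, is at most `n`, and equals
`n` iff every node outside `S` has all of its neighbors in `S`. -/
theorem qcop_unit_reward_utility {V : Type*} [Fintype V] [DecidableEq V]
    (G : SimpleGraph V) [DecidableRel G.Adj]
    (hdeg : ∀ i : V, 0 < G.degree i) (S : Finset V) :
    (∑ i : V, ((if i ∈ S then (1 : ℝ) else 0) +
        ∑ j ∈ G.neighborFinset i,
          (1 / (G.degree i : ℝ)) * (if j ∈ S then 1 else 0) *
            (1 - if i ∈ S then 1 else 0)) =
      ∑ i ∈ S, (1 + ∑ j ∈ G.neighborFinset i \ S, 1 / (G.degree j : ℝ))) ∧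
    (∑ i : V, ((if i ∈ S then (1 : ℝ) else 0) +
        ∑ j ∈ G.neighborFinset i,
          (1 / (G.degree i : ℝ)) * (if j ∈ S then 1 else 0) *
            (1 - if i ∈ S then 1 else 0)) ≤ (Fintype.card V : ℝ)) ∧
    (∑ i : V, ((if i ∈ S then (1 : ℝ) else 0) +
        ∑ j ∈ G.neighborFinset i,
          (1 / (G.degree i : ℝ)) * (if j ∈ S then 1 else 0) *
            (1 - if i ∈ S then 1 else 0)) = (Fintype.card V : ℝ) ↔
      ∀ i : V, i ∉ S → ∀ j ∈ G.neighborFinset i, j ∈ S) := by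
  classical
  -- pointwise simplification
  have key : ∀ i : V, ((if i ∈ S then (1 : ℝ) else 0) +
      ∑ j ∈ G.neighborFinset i,
        (1 / (G.degree i : ℝ)) * (if j ∈ S then 1 else 0) *
          (1 - if i ∈ S then 1 else 0)) =
      if i ∈ S then 1 else
        ((G.neighborFinset i ∩ S).card : ℝ) / (G.degree i : ℝ) := by
    intro i
    by_cases h : i ∈ S
    · simp [h]
    · simp only [h, if_false, if_neg, zero_add, sub_zero, mul_one]
      rw [← Finset.mul_sum]
      have : ∑ j ∈ G.neighborFinset i, (if j ∈ S then (1 : ℝ) else 0)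
          = ((G.neighborFinset i ∩ S).card : ℝ) := by
        rw [Finset.sum_boole]
        simp [Finset.filter_mem_eq_inter]
      rw [this]; ring
  have hsum : (∑ i : V, ((if i ∈ S then (1 : ℝ) else 0) +
      ∑ j ∈ G.neighborFinset i,
        (1 / (G.degree i : ℝ)) * (if j ∈ S then 1 else 0) *
          (1 - if i ∈ S then 1 else 0))) =
      (S.card : ℝ) + ∑ i ∈ Sᶜ, ((G.neighborFinset i ∩ S).card : ℝ) / (G.degree i : ℝ) := by
    rw [Finset.sum_congr rfl fun i _ => key i, Finset.sum_ite, Finset.filter_mem_eq_inter,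
      Finset.univ_inter, Finset.sum_const, nsmul_eq_mul, mul_one]
    congr 1
    apply Finset.sum_congr _ fun _ _ => rfl
    ext x; simp
  -- swap order of summation for part 1
  have hswap : (∑ i ∈ Sᶜ, ((G.neighborFinset i ∩ S).card : ℝ) / (G.degree i : ℝ)) =
      ∑ j ∈ S, ∑ i ∈ G.neighborFinset j \ S, 1 / (G.degree i : ℝ) := by
    have : ∀ i ∈ Sᶜ, ((G.neighborFinset i ∩ S).card : ℝ) / (G.degree i : ℝ)
        = ∑ j ∈ G.neighborFinset i ∩ S, 1 / (G.degree i : ℝ) := by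
      intro i _
      rw [Finset.sum_const, nsmul_eq_mul]
      ring
    rw [Finset.sum_congr rfl this]
    refine Finset.sum_comm' ?_
    intro i j
    simp only [Finset.mem_compl, Finset.mem_inter, SimpleGraph.mem_neighborFinset,
      Finset.mem_sdiff]
    constructor
    · rintro ⟨h1, h2, h3⟩; exact ⟨⟨h2.symm, h1⟩, h3⟩
    · rintro ⟨⟨h1, h2⟩, h3⟩; exact ⟨h2, h1.symm, h3⟩
  have part1 : (∑ i : V, ((if i ∈ S then (1 : ℝ) else 0) +
      ∑ j ∈ G.neighborFinset i,
        (1 / (G.degree i : ℝ)) * (if j ∈ S then 1 else 0) *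
          (1 - if i ∈ S then 1 else 0))) =
      ∑ i ∈ S, (1 + ∑ j ∈ G.neighborFinset i \ S, 1 / (G.degree j : ℝ)) := by
    rw [hsum, hswap, Finset.sum_add_distrib, Finset.sum_const, nsmul_eq_mul, mul_one]
  -- each term of the second sum is at most 1
  have hterm_le : ∀ i ∈ Sᶜ,
      ((G.neighborFinset i ∩ S).card : ℝ) / (G.degree i : ℝ) ≤ 1 := by
    intro i _
    rw [div_le_one (by exact_mod_cast hdeg i)]
    have := Finset.card_le_card (Finset.inter_subset_left :
      G.neighborFinset i ∩ S ⊆ G.neighborFinset i)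
    rw [G.card_neighborFinset_eq_degree] at this
    exact_mod_cast this
  have hcards : (S.card : ℝ) + (Sᶜ.card : ℝ) = (Fintype.card V : ℝ) := by
    exact_mod_cast congrArg Nat.cast (Finset.card_add_card_compl S)
  have part2 : (∑ i : V, ((if i ∈ S then (1 : ℝ) else 0) +
      ∑ j ∈ G.neighborFinset i,
        (1 / (G.degree i : ℝ)) * (if j ∈ S then 1 else 0) *
          (1 - if i ∈ S then 1 else 0))) ≤ (Fintype.card V : ℝ) := by
    rw [hsum, ← hcards]
    gcongr
    calc (∑ i ∈ Sᶜ, ((G.neighborFinset i ∩ S).card : ℝ) / (G.degree i : ℝ))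
        ≤ ∑ _i ∈ Sᶜ, (1 : ℝ) := Finset.sum_le_sum hterm_le
      _ = (Sᶜ.card : ℝ) := by rw [Finset.sum_const, nsmul_eq_mul, mul_one]
  refine ⟨part1, part2, ?_⟩
  rw [hsum, ← hcards]
  have heq : ((S.card : ℝ) + ∑ i ∈ Sᶜ, ((G.neighborFinset i ∩ S).card : ℝ) / (G.degree i : ℝ)
      = (S.card : ℝ) + (Sᶜ.card : ℝ)) ↔
      (∑ i ∈ Sᶜ, ((G.neighborFinset i ∩ S).card : ℝ) / (G.degree i : ℝ))
        = ∑ _i ∈ Sᶜ, (1 : ℝ) := by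
    rw [Finset.sum_const, nsmul_eq_mul, mul_one]
    constructor
    · intro h; linarith
    · intro h; linarith
  rw [heq, Finset.sum_eq_sum_iff_of_le hterm_le]
  constructor
  · intro h i hi j hj
    have hi' : i ∈ Sᶜ := Finset.mem_compl.mpr hi
    have := h i hi'
    have hd : (0 : ℝ) < (G.degree i : ℝ) := by exact_mod_cast hdeg i
    rw [div_eq_one_iff_eq (ne_of_gt hd)] at this
    have hcard : (G.neighborFinset i ∩ S).card = G.degree i := by exact_mod_cast this
    have hsub : G.neighborFinset i ⊆ S := by
      have : G.neighborFinset i ∩ S = G.neighborFinset i :=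
        Finset.eq_of_subset_of_card_le Finset.inter_subset_left
          (by rw [hcard, G.card_neighborFinset_eq_degree])
      intro x hx
      have hx' : x ∈ G.neighborFinset i ∩ S := by rw [this]; exact hx
      exact (Finset.mem_inter.mp hx').2
    exact hsub hj
  · intro h i hi
    have hi' : i ∉ S := Finset.mem_compl.mp hi
    have hsub : G.neighborFinset i ⊆ S := fun j hj => h i hi' j hj
    have : G.neighborFinset i ∩ S = G.neighborFinset i :=
      Finset.inter_eq_left.mpr hsub
    rw [this, G.card_neighborFinset_eq_degree]
    have hd : (0 : ℝ) < (G.degree i : ℝ) := by exact_mod_cast hdeg i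
    field_simp
end
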